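/- arXiv:2512.11910 — 7 statements merged into one kernel-verified Lean document; each statement's English description precedes it below -/
import Mathlib

section
/- For any continuous integrable function F : ℝ → ℝ, the principal value integral over ℝ of F(x - 1/x) dx equals the integral over ℝ of F(x) dx (Cauchy–Schlömilch identity). -/
/-!
On `(0, ∞)` the map `x ↦ x - 1 / x` is a diffeomorphism onto `ℝ` with inverse
`g(t) = (t + √(t² + 4)) / 2`, so substituting `x = g(t)` turns the integral over `(0, ∞)` into
`∫ g'(t) F(t) dt`. The map is odd, so the integral over `(-∞, 0)` becomes `∫ g'(-t) F(t) dt`,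
and `g'(t) + g'(-t) = 1`.
-/

open MeasureTheory Set Real

/-- The inverse of `x ↦ x - 1 / x` on `(0, ∞)`: the positive root of `y ^ 2 = t * y + 1`. -/
noncomputable def posRoot (t : ℝ) : ℝ := (t + √(t ^ 2 + 4)) / 2

noncomputable def posRootDeriv (t : ℝ) : ℝ := (1 + t / √(t ^ 2 + 4)) / 2

lemma abs_lt_sqrt_sq_add_four (t : ℝ) : |t| < √(t ^ 2 + 4) :=
  (lt_sqrt (abs_nonneg t)).2 (by rw [sq_abs]; linarith)

lemma posRoot_pos (t : ℝ) : 0 < posRoot t := by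
  have := abs_lt_sqrt_sq_add_four t
  have := neg_abs_le t
  unfold posRoot
  linarith

lemma posRoot_sub_one_div (t : ℝ) : posRoot t - 1 / posRoot t = t := by
  have hsq : posRoot t ^ 2 = t * posRoot t + 1 := by
    unfold posRoot
    linear_combination (sq_sqrt (by positivity : (0 : ℝ) ≤ t ^ 2 + 4)) / 4
  field_simp [(posRoot_pos t).ne']
  linear_combination hsq

lemma posRoot_sub_one_div_self {y : ℝ} (hy : 0 < y) : posRoot (y - 1 / y) = y := by
  have hsq : (y - 1 / y) ^ 2 + 4 = (y + 1 / y) ^ 2 := by field_simp; ring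
  rw [posRoot, hsq, sqrt_sq (by positivity)]
  ring

lemma range_posRoot : range posRoot = Ioi 0 :=
  Subset.antisymm (range_subset_iff.2 posRoot_pos)
    fun y hy => ⟨y - 1 / y, posRoot_sub_one_div_self hy⟩

lemma posRoot_injective : Function.Injective posRoot :=
  Function.LeftInverse.injective (g := fun y => y - 1 / y) posRoot_sub_one_div

lemma hasDerivAt_posRoot (t : ℝ) : HasDerivAt posRoot (posRootDeriv t) t := by
  have hsqrt := ((hasDerivAt_pow 2 t).add_const 4).sqrt (by positivity)
  refine (((hasDerivAt_id' t).add hsqrt).div_const 2).congr_deriv ?_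
  have : √(t ^ 2 + 4) ≠ 0 := (sqrt_pos.2 (by positivity)).ne'
  rw [posRootDeriv]
  field_simp
  ring

lemma continuous_posRootDeriv : Continuous posRootDeriv := by
  unfold posRootDeriv
  exact (continuous_const.add (continuous_id.div (by fun_prop)
    fun t => (sqrt_pos.2 (by positivity)).ne')).div_const 2

lemma posRootDeriv_mem_Icc (t : ℝ) : posRootDeriv t ∈ Icc 0 1 := by
  have hs := abs_lt_sqrt_sq_add_four t
  have : |t / √(t ^ 2 + 4)| ≤ 1 := by
    rw [abs_div, abs_of_pos (abs_nonneg t |>.trans_lt hs)]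
    exact div_le_one_of_le₀ hs.le (sqrt_nonneg _)
  rw [abs_le] at this
  unfold posRootDeriv
  constructor <;> linarith

lemma posRootDeriv_neg_add_posRootDeriv (t : ℝ) : posRootDeriv (-t) + posRootDeriv t = 1 := by
  simp only [posRootDeriv, neg_sq]
  ring

section

variable {E : Type*} [NormedAddCommGroup E] [NormedSpace ℝ E]

lemma integral_Ioi_comp_sub_one_div (F : ℝ → E) :
    ∫ x in Ioi 0, F (x - 1 / x) = ∫ t, posRootDeriv t • F t := by
  rw [← range_posRoot, ← image_univ, integral_image_eq_integral_abs_deriv_smul MeasurableSet.univ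
    (fun t _ => (hasDerivAt_posRoot t).hasDerivWithinAt) posRoot_injective.injOn, setIntegral_univ]
  simp only [posRoot_sub_one_div, abs_of_nonneg (posRootDeriv_mem_Icc _).1]

lemma integral_Iio_comp_sub_one_div (F : ℝ → E) :
    ∫ x in Iio 0, F (x - 1 / x) = ∫ t, posRootDeriv (-t) • F t := by
  have hodd (x : ℝ) : -x - 1 / -x = -(x - 1 / x) := by ring
  rw [← integral_Iic_eq_integral_Iio, ← neg_zero, ← integral_comp_neg_Ioi]
  simp only [hodd]
  rw [integral_Ioi_comp_sub_one_div (fun t => F (-t)), ← integral_neg_eq_self]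
  simp only [neg_neg]

lemma integrable_posRootDeriv_comp_smul {F : ℝ → E} (hF : Integrable F) {σ : ℝ → ℝ}
    (hσ : Continuous σ) : Integrable (fun t => posRootDeriv (σ t) • F t) :=
  hF.bdd_smul 1 (continuous_posRootDeriv.comp hσ).aestronglyMeasurable
    (Filter.Eventually.of_forall fun t => by
      obtain ⟨h0, h1⟩ := posRootDeriv_mem_Icc (σ t)
      rwa [Real.norm_of_nonneg h0])

end

theorem cauchy_schlomilch_general (F : ℝ → ℝ) (hInt : Integrable F) :
    (∫ x in Iio (0:ℝ), F (x - 1/x)) + (∫ x in Ioi (0:ℝ), F (x - 1/x))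
      = ∫ x, F x := by
  rw [integral_Iio_comp_sub_one_div, integral_Ioi_comp_sub_one_div,
    ← integral_add (integrable_posRootDeriv_comp_smul hInt continuous_neg)
      (integrable_posRootDeriv_comp_smul hInt continuous_id')]
  simp only [← add_smul, posRootDeriv_neg_add_posRootDeriv, one_smul]

theorem cauchy_schlomilch (F : ℝ → ℝ) (hF : Continuous F) (hInt : Integrable F) :
    (∫ x in Iio (0:ℝ), F (x - 1/x)) + (∫ x in Ioi (0:ℝ), F (x - 1/x))
      = ∫ x, F x :=
  cauchy_schlomilch_general F hInt
end

section
/- For any a > 0 and b > 0 and any continuous integrable F : ℝ → ℝ, the principal-value integral over ℝ of F(ax - b/x) dx equals (1/a) times the integral over ℝ of F(x) dx. -/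
/-!
Write `φ x = a * x - b / x`. The involution `x ↦ -(b / a) / x` exchanges the two half-lines and
leaves `φ` invariant, so the integral over `(-∞, 0)` equals `∫ x in Ioi 0, b / a / x ^ 2 * F (φ x)`.
Adding the integral over `(0, ∞)` gives `(1 / a) * ∫ x in Ioi 0, (a + b / x ^ 2) * F (φ x)`, where
`a + b / x ^ 2 = φ' x` and `φ` is an increasing bijection of `(0, ∞)` onto `ℝ`.
-/

open MeasureTheory Set Real

section

variable {a b c : ℝ}

theorem hasDerivAt_mul_sub_div (a b : ℝ) {x : ℝ} (hx : x ≠ 0) :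
    HasDerivAt (fun x => a * x - b / x) (a + b / x ^ 2) x :=
  (((hasDerivAt_id' x).const_mul a).sub
    ((hasDerivAt_const x b).div (hasDerivAt_id' x) hx)).congr_deriv (by ring)

theorem monotoneOn_mul_sub_div (ha : 0 ≤ a) (hb : 0 ≤ b) :
    MonotoneOn (fun x => a * x - b / x) (Ioi 0) := fun _ hx _ _ hxy =>
  sub_le_sub (mul_le_mul_of_nonneg_left hxy ha) (div_le_div_of_nonneg_left hb hx hxy)

theorem surjOn_mul_sub_div (ha : 0 < a) (hb : 0 < b) :
    SurjOn (fun x => a * x - b / x) (Ioi 0) univ := by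
  intro u _
  -- the positive root of `a x ^ 2 - u x - b`
  set r := √(u ^ 2 + 4 * a * b)
  have hr : r ^ 2 = u ^ 2 + 4 * a * b := sq_sqrt (by positivity)
  have hur : |u| < r := by
    rw [← sqrt_sq_eq_abs]
    exact sqrt_lt_sqrt (sq_nonneg u) (by nlinarith)
  have hpos : 0 < u + r := by linarith [neg_abs_le u]
  refine ⟨(u + r) / (2 * a), div_pos hpos (by positivity), ?_⟩
  field_simp
  linear_combination hr

theorem image_mul_sub_div_Ioi (ha : 0 < a) (hb : 0 < b) :
    (fun x => a * x - b / x) '' Ioi 0 = univ :=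
  eq_univ_of_univ_subset (surjOn_mul_sub_div ha hb)

theorem hasDerivAt_neg_div (c : ℝ) {y : ℝ} (hy : y ≠ 0) :
    HasDerivAt (fun y => -c / y) (c / y ^ 2) y :=
  ((hasDerivAt_const y (-c)).div (hasDerivAt_id' y) hy).congr_deriv (by ring)

theorem monotoneOn_neg_div (hc : 0 ≤ c) : MonotoneOn (fun y => -c / y) (Ioi 0) :=
  fun _ hx _ _ hxy => by
    simp only [neg_div, neg_le_neg_iff]
    exact div_le_div_of_nonneg_left hc hx hxy

theorem involutive_neg_div (hc : c ≠ 0) : Function.Involutive (fun y : ℝ => -c / y) := by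
  intro y
  simp [neg_div, div_neg, div_div_eq_mul_div, hc]

theorem image_neg_div_Ioi (hc : 0 < c) : (fun y => -c / y) '' Ioi 0 = Iio 0 := by
  rw [(involutive_neg_div hc.ne').image_eq_preimage_symm]
  ext y
  simp [neg_div, div_neg_iff, hc, not_lt_of_gt hc]

theorem mul_sub_div_neg_div (ha : a ≠ 0) (hb : b ≠ 0) (y : ℝ) :
    a * (-(b / a) / y) - b / (-(b / a) / y) = a * y - b / y := by
  rcases eq_or_ne y 0 with rfl | hy
  · simp
  · field_simp
    ring

end

section

variable {E : Type*} [NormedAddCommGroup E] [NormedSpace ℝ E] {a b : ℝ}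

theorem integral_Iio_comp_mul_sub_div (ha : 0 < a) (hb : 0 < b) (f : ℝ → E) :
    ∫ x in Iio 0, f (a * x - b / x) = ∫ y in Ioi 0, (b / a / y ^ 2) • f (a * y - b / y) := by
  have hc : 0 < b / a := div_pos hb ha
  rw [← image_neg_div_Ioi hc, integral_image_eq_integral_deriv_smul_of_monotoneOn measurableSet_Ioi
    (fun y hy => (hasDerivAt_neg_div _ (ne_of_gt hy)).hasDerivWithinAt) (monotoneOn_neg_div hc.le)]
  simp only [mul_sub_div_neg_div ha.ne' hb.ne']

theorem integrableOn_Ioi_deriv_smul_comp_mul_sub_div (ha : 0 < a) (hb : 0 < b) {f : ℝ → E}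
    (hf : Integrable f) :
    IntegrableOn (fun x => (a + b / x ^ 2) • f (a * x - b / x)) (Ioi 0) := by
  rw [← integrableOn_image_iff_integrableOn_deriv_smul_of_monotoneOn measurableSet_Ioi
    (fun x hx => (hasDerivAt_mul_sub_div a b (ne_of_gt hx)).hasDerivWithinAt)
    (monotoneOn_mul_sub_div ha.le hb.le), image_mul_sub_div_Ioi ha hb, integrableOn_univ]
  exact hf

theorem integral_Ioi_deriv_smul_comp_mul_sub_div (ha : 0 < a) (hb : 0 < b) (f : ℝ → E) :
    ∫ x in Ioi 0, (a + b / x ^ 2) • f (a * x - b / x) = ∫ x, f x := by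
  rw [← integral_image_eq_integral_deriv_smul_of_monotoneOn measurableSet_Ioi
    (fun x hx => (hasDerivAt_mul_sub_div a b (ne_of_gt hx)).hasDerivWithinAt)
    (monotoneOn_mul_sub_div ha.le hb.le), image_mul_sub_div_Ioi ha hb, Measure.restrict_univ]

theorem integrableOn_Ioi_comp_mul_sub_div (ha : 0 < a) (hb : 0 < b) {f : ℝ → E}
    (hf : Integrable f) : IntegrableOn (fun x => f (a * x - b / x)) (Ioi 0) := by
  have ha_le : ∀ x : ℝ, a ≤ a + b / x ^ 2 := fun x => le_add_of_nonneg_right (by positivity)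
  have hbound : ∀ x : ℝ, ‖(a + b / x ^ 2)⁻¹‖ ≤ a⁻¹ := fun x => by
    rw [norm_inv, Real.norm_of_nonneg (ha.le.trans (ha_le x))]
    exact inv_anti₀ ha (ha_le x)
  refine ((integrableOn_Ioi_deriv_smul_comp_mul_sub_div ha hb hf).bdd_smul a⁻¹
    (by fun_prop : Measurable _).aestronglyMeasurable
    (ae_of_all _ hbound)).congr (ae_of_all _ fun x => ?_)
  simp [smul_smul, inv_mul_cancel₀ (ha.trans_le (ha_le x)).ne']

end

theorem cauchy_schlomilch_ab_general (a b : ℝ) (ha : 0 < a) (hb : 0 < b)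
    (F : ℝ → ℝ) (hInt : Integrable F) :
    (∫ x in Iio (0:ℝ), F (a * x - b / x)) + (∫ x in Ioi (0:ℝ), F (a * x - b / x))
      = (1 / a) * ∫ x, F x := by
  have hweight (x : ℝ) : b / a / x ^ 2 * F (a * x - b / x)
      = 1 / a * ((a + b / x ^ 2) * F (a * x - b / x)) - F (a * x - b / x) := by
    field_simp
    ring
  have hH := (integrableOn_Ioi_deriv_smul_comp_mul_sub_div ha hb hInt).const_mul (1 / a)
  have hG := integrableOn_Ioi_comp_mul_sub_div ha hb hInt
  simp only [smul_eq_mul] at hH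
  calc (∫ x in Iio 0, F (a * x - b / x)) + ∫ x in Ioi 0, F (a * x - b / x)
      = (∫ x in Ioi 0, 1 / a * ((a + b / x ^ 2) * F (a * x - b / x)) - F (a * x - b / x))
          + ∫ x in Ioi 0, F (a * x - b / x) := by
        simp only [integral_Iio_comp_mul_sub_div ha hb, smul_eq_mul, hweight]
    _ = 1 / a * ∫ x in Ioi 0, (a + b / x ^ 2) • F (a * x - b / x) := by
        simp only [integral_sub hH hG, integral_const_mul, smul_eq_mul, sub_add_cancel]
    _ = 1 / a * ∫ x, F x := by rw [integral_Ioi_deriv_smul_comp_mul_sub_div ha hb]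

theorem cauchy_schlomilch_ab (a b : ℝ) (ha : 0 < a) (hb : 0 < b)
    (F : ℝ → ℝ) (hF : Continuous F) (hInt : Integrable F) :
    (∫ x in Iio (0:ℝ), F (a * x - b / x)) + (∫ x in Ioi (0:ℝ), F (a * x - b / x))
      = (1 / a) * ∫ x, F x :=
  cauchy_schlomilch_ab_general a b ha hb F hInt
end

section
/- Let u(x) = x - a/(x - b) with a > 0, b ∈ ℝ, and let F : ℝ → ℝ be continuous and integrable. Then the sum of the integrals of F(u(x)) over (-∞, b) and over (b, ∞) equals the integral of F over ℝ. -/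
/-!
The restrictions of `u x = x - a / (x - b)` to `(-∞, b)` and to `(b, ∞)` are bijections onto `ℝ`;
their inverses are the two roots `(b + y ∓ √((y - b)² + 4a)) / 2` of `(x - b) (x - y) = a`.
Changing variables along each inverse turns the two integrals into `∫ F` weighted by the
derivatives of the roots; the roots sum to `b + y`, so these weights add up to `1`.
-/

open MeasureTheory Set Function

theorem integral_range_comp_eq_integral_deriv_smul {E : Type*} [NormedAddCommGroup E]
    [NormedSpace ℝ E] {g g' u : ℝ → ℝ} (hg : ∀ y, HasDerivAt g (g' y) y) (hg' : ∀ y, 0 ≤ g' y)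
    (hu : LeftInverse u g) (F : ℝ → E) :
    ∫ x in range g, F (u x) = ∫ y, g' y • F y := by
  rw [← image_univ, integral_image_eq_integral_abs_deriv_smul MeasurableSet.univ
    (fun y _ => (hg y).hasDerivWithinAt) hu.injective.injOn, Measure.restrict_univ]
  simp_rw [hu _, abs_of_nonneg (hg' _)]

theorem sub_div_sub_eq_of_mul_eq {K : Type*} [Field K] {a b x y : K} (ha : a ≠ 0) (h : (x - b) * (x - y) = a) :
    x - a / (x - b) = y := by
  have hx : x - b ≠ 0 := by
    rintro hx
    rw [hx, zero_mul] at h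
    exact ha h.symm
  rw [← h, mul_div_cancel_left₀ _ hx]
  ring

noncomputable def upperBranch (a b y : ℝ) : ℝ := (b + y + √((y - b) ^ 2 + 4 * a)) / 2

noncomputable def lowerBranch (a b y : ℝ) : ℝ := b + y - upperBranch a b y

noncomputable def upperBranchDeriv (a b y : ℝ) : ℝ := (1 + (y - b) / √((y - b) ^ 2 + 4 * a)) / 2

section Branches

variable {a b : ℝ}

theorem upperBranch_sub_mul_sub (ha : 0 ≤ a) (y : ℝ) :
    (upperBranch a b y - b) * (upperBranch a b y - y) = a := by
  have hsq := Real.sq_sqrt (show 0 ≤ (y - b) ^ 2 + 4 * a by positivity)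
  rw [upperBranch]
  linear_combination hsq / 4

theorem lowerBranch_sub_mul_sub (ha : 0 ≤ a) (y : ℝ) :
    (lowerBranch a b y - b) * (lowerBranch a b y - y) = a := by
  rw [lowerBranch]
  linear_combination upperBranch_sub_mul_sub (b := b) ha y

theorem leftInverse_upperBranch (ha : 0 < a) :
    LeftInverse (fun x => x - a / (x - b)) (upperBranch a b) :=
  fun y => sub_div_sub_eq_of_mul_eq ha.ne' (upperBranch_sub_mul_sub ha.le y)

theorem leftInverse_lowerBranch (ha : 0 < a) :
    LeftInverse (fun x => x - a / (x - b)) (lowerBranch a b) :=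
  fun y => sub_div_sub_eq_of_mul_eq ha.ne' (lowerBranch_sub_mul_sub ha.le y)

theorem abs_sub_lt_sqrt_sq_add (ha : 0 < a) (y : ℝ) : |y - b| < √((y - b) ^ 2 + 4 * a) := by
  rw [← Real.sqrt_sq_eq_abs]
  exact Real.sqrt_lt_sqrt (sq_nonneg _) (by linarith)

theorem sqrt_sq_add_eq_abs_of_ne {x : ℝ} (hx : x ≠ b) :
    √((x - a / (x - b) - b) ^ 2 + 4 * a) = |x - b + a / (x - b)| := by
  rw [← Real.sqrt_sq_eq_abs]
  congr 1
  field_simp [sub_ne_zero.2 hx]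
  ring

theorem range_upperBranch (ha : 0 < a) : range (upperBranch a b) = Ioi b := by
  ext x
  constructor
  · rintro ⟨y, rfl⟩
    have := (abs_lt.1 (abs_sub_lt_sqrt_sq_add (b := b) ha y)).1
    rw [mem_Ioi, upperBranch]
    linarith
  · intro hx
    have hxb : 0 < x - b := sub_pos.2 hx
    refine ⟨x - a / (x - b), ?_⟩
    rw [upperBranch, sqrt_sq_add_eq_abs_of_ne hx.ne', abs_of_pos (add_pos hxb (div_pos ha hxb))]
    ring

theorem range_lowerBranch (ha : 0 < a) : range (lowerBranch a b) = Iio b := by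
  ext x
  constructor
  · rintro ⟨y, rfl⟩
    have := (abs_lt.1 (abs_sub_lt_sqrt_sq_add (b := b) ha y)).2
    rw [mem_Iio, lowerBranch, upperBranch]
    linarith
  · intro hx
    have hxb : x - b < 0 := sub_neg.2 hx
    have hsum : x - b + a / (x - b) < 0 := by
      have := div_neg_of_pos_of_neg ha hxb
      linarith
    refine ⟨x - a / (x - b), ?_⟩
    rw [lowerBranch, upperBranch, sqrt_sq_add_eq_abs_of_ne hx.ne, abs_of_neg hsum]
    ring

theorem hasDerivAt_upperBranch (ha : 0 < a) (y : ℝ) :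
    HasDerivAt (upperBranch a b) (upperBranchDeriv a b y) y := by
  have hpos : 0 < (y - b) ^ 2 + 4 * a := by positivity
  have hsqrt : HasDerivAt (fun y => √((y - b) ^ 2 + 4 * a))
      ((y - b) / √((y - b) ^ 2 + 4 * a)) y := by
    have hsq : HasDerivAt (fun y => (y - b) ^ 2 + 4 * a) (2 * (y - b)) y := by
      simpa using (((hasDerivAt_id y).sub_const b).pow 2).add_const (4 * a)
    exact (hsq.sqrt hpos.ne').congr_deriv (by field_simp)
  exact (((hasDerivAt_id y).const_add b).add hsqrt).div_const 2

theorem hasDerivAt_lowerBranch (ha : 0 < a) (y : ℝ) :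
    HasDerivAt (lowerBranch a b) (1 - upperBranchDeriv a b y) y :=
  ((hasDerivAt_id y).const_add b).sub (hasDerivAt_upperBranch ha y)

theorem upperBranchDeriv_mem_Icc (ha : 0 < a) (y : ℝ) : upperBranchDeriv a b y ∈ Icc 0 1 := by
  have hsqrt : 0 < √((y - b) ^ 2 + 4 * a) := Real.sqrt_pos.2 (by positivity)
  have hq : |(y - b) / √((y - b) ^ 2 + 4 * a)| < 1 := by
    rw [abs_div, abs_of_pos hsqrt, div_lt_one hsqrt]
    exact abs_sub_lt_sqrt_sq_add ha y
  obtain ⟨hq₁, hq₂⟩ := abs_lt.1 hq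
  rw [upperBranchDeriv, mem_Icc]
  constructor <;> linarith

theorem continuous_upperBranchDeriv (ha : 0 < a) : Continuous (upperBranchDeriv a b) := by
  unfold upperBranchDeriv
  fun_prop (disch := exact fun y => (Real.sqrt_pos.2 (by positivity)).ne')

end Branches

theorem meromorphic_reduction_one_pole_general (a b : ℝ) (ha : 0 < a)
    (F : ℝ → ℝ) (hInt : Integrable F) :
    (∫ x in Iio b, F (x - a / (x - b))) + (∫ x in Ioi b, F (x - a / (x - b)))
      = ∫ x, F x := by
  have hw := upperBranchDeriv_mem_Icc (b := b) ha
  have hwF : Integrable (fun y => upperBranchDeriv a b y • F y) :=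
    hInt.bdd_smul 1 (continuous_upperBranchDeriv ha).aestronglyMeasurable
      (Filter.Eventually.of_forall fun y => by
        rw [Real.norm_of_nonneg (hw y).1]; exact (hw y).2)
  rw [← range_lowerBranch ha, ← range_upperBranch ha,
    integral_range_comp_eq_integral_deriv_smul (hasDerivAt_lowerBranch ha)
      (fun y => sub_nonneg.2 (hw y).2) (leftInverse_lowerBranch ha),
    integral_range_comp_eq_integral_deriv_smul (hasDerivAt_upperBranch ha)
      (fun y => (hw y).1) (leftInverse_upperBranch ha)]
  simp_rw [sub_smul, one_smul]
  rw [integral_sub hInt hwF]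
  abel

theorem meromorphic_reduction_one_pole (a b : ℝ) (ha : 0 < a)
    (F : ℝ → ℝ) (hF : Continuous F) (hInt : Integrable F) :
    (∫ x in Iio b, F (x - a / (x - b))) + (∫ x in Ioi b, F (x - a / (x - b)))
      = ∫ x, F x :=
  meromorphic_reduction_one_pole_general a b ha F hInt
end

section
/- Let u(x) = x - a₁/(x - b₁) - a₂/(x - b₂) with a₁, a₂ > 0, b₁ < b₂, and let F : ℝ → ℝ be continuous and integrable. Then the sum of the integrals of F(u(x)) over the three intervals (-∞, b₁), (b₁, b₂), (b₂, ∞) equals the integral of F over ℝ. -/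
/-!
On each of the intervals `(-∞, b₁)`, `(b₁, b₂)`, `(b₂, ∞)` the map `u` is increasing and runs
from `-∞` to `∞`, so it has an inverse branch `gᵢ : ℝ → ℝ` there, and substituting `x = gᵢ y`
turns the `i`-th integral into `∫ gᵢ' y * F y dy`. For each `y` the three values `gᵢ y` are the
roots of the cubic `(x - y)(x - b₁)(x - b₂) - a₁ (x - b₂) - a₂ (x - b₁)`, so by Vieta
`∑ gᵢ y = y + b₁ + b₂`. Hence the weights `gᵢ' ≥ 0` add up to `1`, and the integrals add up
to `∫ F`.
-/

open MeasureTheory Set Filter Topology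

theorem exists_inverse_hasDerivAt_of_surjOn {s : Set ℝ} (hs : IsOpen s) (hconv : Convex ℝ s)
    {u u' : ℝ → ℝ} (hu : ∀ x ∈ s, HasDerivAt u (u' x) x) (hu' : ∀ x ∈ s, 0 < u' x)
    (hsurj : SurjOn u s univ) :
    ∃ g : ℝ → ℝ, StrictMono g ∧ range g = s ∧ (∀ y, u (g y) = y) ∧
      ∀ y, HasDerivAt g (u' (g y))⁻¹ y := by
  have hmono : StrictMonoOn u s := strictMonoOn_of_deriv_pos hconv
    (fun x hx => (hu x hx).continuousAt.continuousWithinAt)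
    (fun x hx => by rw [hs.interior_eq] at hx; rw [(hu x hx).deriv]; exact hu' x hx)
  choose g hgs hug using fun y => hsurj (mem_univ y)
  have hg : StrictMono g := fun y y' h =>
    (hmono.lt_iff_lt (hgs y) (hgs y')).1 (by rwa [hug, hug])
  have hrange : range g = s := (range_subset_iff.2 hgs).antisymm fun x hx =>
    ⟨u x, hmono.injOn (hgs _) hx (hug (u x))⟩
  refine ⟨g, hg, hrange, hug, fun y => ?_⟩
  have hcont : ContinuousAt g y := (hg.strictMonoOn univ).continuousAt_of_image_mem_nhds univ_mem
    (by rw [image_univ, hrange]; exact hs.mem_nhds (hgs y))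
  exact HasDerivAt.of_local_left_inverse hcont (hu _ (hgs y)) (hu' _ (hgs y)).ne'
    (Eventually.of_forall hug)

section Integral

variable {E : Type*} [NormedAddCommGroup E] [NormedSpace ℝ E]

theorem setIntegral_comp_eq_integral_abs_deriv_smul {s : Set ℝ} {u g g' : ℝ → ℝ}
    (hg : Function.Injective g) (hrange : range g = s) (hug : ∀ y, u (g y) = y)
    (hg' : ∀ y, HasDerivAt g (g' y) y) (F : ℝ → E) :
    ∫ x in s, F (u x) = ∫ y, |g' y| • F y := by
  rw [← hrange, ← image_univ, integral_image_eq_integral_abs_deriv_smul MeasurableSet.univ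
    (fun y _ => (hg' y).hasDerivWithinAt) hg.injOn, Measure.restrict_univ]
  simp only [hug]

theorem sum_integral_smul_eq_integral_of_sum_eq_one {ι : Type*} [Fintype ι] {w : ι → ℝ → ℝ}
    (hw : ∀ i, AEStronglyMeasurable (w i)) (hw₀ : ∀ i y, 0 ≤ w i y)
    (hw₁ : ∀ y, ∑ i, w i y = 1) {F : ℝ → E} (hF : Integrable F) :
    ∑ i, ∫ y, w i y • F y = ∫ y, F y := by
  have hle : ∀ i y, ‖w i y‖ ≤ 1 := fun i y => by
    rw [Real.norm_of_nonneg (hw₀ i y), ← hw₁ y]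
    exact Finset.single_le_sum (fun j _ => hw₀ j y) (Finset.mem_univ i)
  have hint : ∀ i, Integrable (fun y => w i y • F y) :=
    fun i => hF.bdd_smul 1 (hw i) (Eventually.of_forall (hle i))
  rw [← integral_finsetSum _ fun i _ => hint i]
  simp only [← Finset.sum_smul, hw₁, one_smul]

theorem sum_setIntegral_comp_eq_integral {ι : Type*} [Fintype ι] {s : ι → Set ℝ}
    (hs : ∀ i, IsOpen (s i)) (hconv : ∀ i, Convex ℝ (s i)) {u u' : ℝ → ℝ}
    (hu : ∀ i, ∀ x ∈ s i, HasDerivAt u (u' x) x) (hu' : ∀ i, ∀ x ∈ s i, 0 < u' x)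
    (hsurj : ∀ i, SurjOn u (s i) univ) (c : ℝ)
    (hsum : ∀ y (r : ι → ℝ), (∀ i, r i ∈ s i) → (∀ i, u (r i) = y) → ∑ i, r i = y + c)
    {F : ℝ → E} (hF : Integrable F) :
    ∑ i, ∫ x in s i, F (u x) = ∫ y, F y := by
  choose g hg hrange hug hg' using fun i =>
    exists_inverse_hasDerivAt_of_surjOn (hs i) (hconv i) (hu i) (hu' i) (hsurj i)
  have hgs : ∀ i y, g i y ∈ s i := fun i y => hrange i ▸ mem_range_self y
  have hderiv_sum : ∀ y, ∑ i, deriv (g i) y = 1 := fun y =>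
    (HasDerivAt.fun_sum fun i _ => (hg' i y).differentiableAt.hasDerivAt).unique <|
      ((hasDerivAt_id y).add_const c).congr_of_eventuallyEq <| Eventually.of_forall
        fun y => hsum y (fun i => g i y) (fun i => hgs i y) (fun i => hug i y)
  have hderiv_nonneg : ∀ i y, 0 ≤ deriv (g i) y := fun i y =>
    (hg' i y).deriv ▸ (inv_pos.2 (hu' i _ (hgs i y))).le
  calc ∑ i, ∫ x in s i, F (u x) = ∑ i, ∫ y, deriv (g i) y • F y := by
        refine Finset.sum_congr rfl fun i _ => ?_
        rw [setIntegral_comp_eq_integral_abs_deriv_smul (hg i).injective (hrange i) (hug i)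
          fun y => (hg' i y).differentiableAt.hasDerivAt]
        simp only [abs_of_nonneg (hderiv_nonneg i _)]
    _ = ∫ y, F y := sum_integral_smul_eq_integral_of_sum_eq_one
        (fun i => (measurable_deriv _).aestronglyMeasurable) hderiv_nonneg hderiv_sum hF

end Integral

theorem add_add_eq_neg_of_cubic_eq_zero {K : Type*} [Field K] {p q t r₀ r₁ r₂ : K}
    (h₀₁ : r₀ ≠ r₁) (h₀₂ : r₀ ≠ r₂) (h₁₂ : r₁ ≠ r₂)
    (h₀ : r₀ ^ 3 + p * r₀ ^ 2 + q * r₀ + t = 0) (h₁ : r₁ ^ 3 + p * r₁ ^ 2 + q * r₁ + t = 0)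
    (h₂ : r₂ ^ 3 + p * r₂ ^ 2 + q * r₂ + t = 0) :
    r₀ + r₁ + r₂ = -p := by
  have e₀₁ : r₀ ^ 2 + r₀ * r₁ + r₁ ^ 2 + p * (r₀ + r₁) + q = 0 :=
    mul_left_cancel₀ (sub_ne_zero.2 h₀₁) (by linear_combination h₀ - h₁)
  have e₂₁ : r₂ ^ 2 + r₂ * r₁ + r₁ ^ 2 + p * (r₂ + r₁) + q = 0 :=
    mul_left_cancel₀ (sub_ne_zero.2 h₁₂.symm) (by linear_combination h₂ - h₁)
  have hsum : r₀ + r₁ + r₂ + p = 0 := mul_left_cancel₀ (sub_ne_zero.2 h₀₂)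
    (by linear_combination e₀₁ - e₂₁)
  linear_combination hsum

theorem tendsto_sub_const_nhdsLT (b : ℝ) : Tendsto (· - b) (𝓝[<] b) (𝓝[<] 0) :=
  tendsto_nhdsWithin_iff.2
    ⟨(sub_self b ▸ (continuous_sub_right b).tendsto b).mono_left nhdsWithin_le_nhds,
      eventually_nhdsWithin_of_forall fun _ hx => mem_Iio.2 (sub_neg.2 hx)⟩

theorem tendsto_sub_const_nhdsGT (b : ℝ) : Tendsto (· - b) (𝓝[>] b) (𝓝[>] 0) :=
  tendsto_nhdsWithin_iff.2
    ⟨(sub_self b ▸ (continuous_sub_right b).tendsto b).mono_left nhdsWithin_le_nhds,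
      eventually_nhdsWithin_of_forall fun _ hx => mem_Ioi.2 (sub_pos.2 hx)⟩

theorem ContinuousAt.tendsto_sub_div_sub_nhdsLT {h : ℝ → ℝ} {a b : ℝ} (hh : ContinuousAt h b)
    (ha : 0 < a) : Tendsto (fun x => h x - a / (x - b)) (𝓝[<] b) atTop := by
  have hpole : Tendsto (fun x => -a * (x - b)⁻¹) (𝓝[<] b) atTop :=
    tendsto_const_nhds.neg_mul_atBot (neg_neg_of_pos ha)
      (tendsto_inv_nhdsLT_zero.comp (tendsto_sub_const_nhdsLT b))
  refine ((hh.tendsto.mono_left nhdsWithin_le_nhds).add_atTop hpole).congr fun x => ?_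
  ring

theorem ContinuousAt.tendsto_sub_div_sub_nhdsGT {h : ℝ → ℝ} {a b : ℝ} (hh : ContinuousAt h b)
    (ha : 0 < a) : Tendsto (fun x => h x - a / (x - b)) (𝓝[>] b) atBot := by
  have hpole : Tendsto (fun x => -a * (x - b)⁻¹) (𝓝[>] b) atBot :=
    tendsto_const_nhds.neg_mul_atTop (neg_neg_of_pos ha)
      (tendsto_inv_nhdsGT_zero.comp (tendsto_sub_const_nhdsGT b))
  refine ((hh.tendsto.mono_left nhdsWithin_le_nhds).add_atBot hpole).congr fun x => ?_
  ring

noncomputable def twoPoleMap (a₁ a₂ b₁ b₂ x : ℝ) : ℝ := x - a₁ / (x - b₁) - a₂ / (x - b₂)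

def twoPoleIntervals (b₁ b₂ : ℝ) : Fin 3 → Set ℝ := ![Iio b₁, Ioo b₁ b₂, Ioi b₂]

section TwoPoles

variable {a₁ a₂ b₁ b₂ : ℝ}

theorem hasDerivAt_twoPoleMap {x : ℝ} (h₁ : x ≠ b₁) (h₂ : x ≠ b₂) :
    HasDerivAt (twoPoleMap a₁ a₂ b₁ b₂) (1 + a₁ / (x - b₁) ^ 2 + a₂ / (x - b₂) ^ 2) x := by
  have hpole : ∀ {a b : ℝ}, x ≠ b → HasDerivAt (fun x => a / (x - b)) (-(a / (x - b) ^ 2)) x :=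
    fun {a b} h => ((hasDerivAt_const x a).fun_div ((hasDerivAt_id' x).sub_const b)
      (sub_ne_zero.2 h)).congr_deriv (by ring)
  exact (((hasDerivAt_id' x).sub (hpole h₁)).sub (hpole h₂)).congr_deriv (by ring)

theorem tendsto_twoPoleMap_atBot : Tendsto (twoPoleMap a₁ a₂ b₁ b₂) atBot atBot := by
  have hpole : ∀ a b : ℝ, Tendsto (fun x => a / (x - b)) atBot (𝓝 0) := fun a b =>
    tendsto_const_nhds.div_atBot (tendsto_atBot_add_const_right _ (-b) tendsto_id)
  exact (tendsto_id.atBot_add ((hpole a₁ b₁).add (hpole a₂ b₂)).neg).congr fun x => by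
    simp only [twoPoleMap, id]; ring

theorem tendsto_twoPoleMap_atTop : Tendsto (twoPoleMap a₁ a₂ b₁ b₂) atTop atTop := by
  have hpole : ∀ a b : ℝ, Tendsto (fun x => a / (x - b)) atTop (𝓝 0) := fun a b =>
    tendsto_const_nhds.div_atTop (tendsto_atTop_add_const_right _ (-b) tendsto_id)
  exact (tendsto_id.atTop_add ((hpole a₁ b₁).add (hpole a₂ b₂)).neg).congr fun x => by
    simp only [twoPoleMap, id]; ring

theorem isOpen_twoPoleIntervals (i : Fin 3) : IsOpen (twoPoleIntervals b₁ b₂ i) := by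
  fin_cases i
  exacts [isOpen_Iio, isOpen_Ioo, isOpen_Ioi]

theorem convex_twoPoleIntervals (i : Fin 3) : Convex ℝ (twoPoleIntervals b₁ b₂ i) := by
  fin_cases i
  exacts [convex_Iio b₁, convex_Ioo b₁ b₂, convex_Ioi b₂]

theorem ne_of_mem_twoPoleIntervals (hb : b₁ < b₂) {i : Fin 3} {x : ℝ}
    (hx : x ∈ twoPoleIntervals b₁ b₂ i) : x ≠ b₁ ∧ x ≠ b₂ := by
  fin_cases i
  · exact ⟨hx.ne, (hx.trans hb).ne⟩
  · exact ⟨hx.1.ne', hx.2.ne⟩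
  · exact ⟨(hb.trans hx).ne', hx.ne'⟩

theorem surjOn_twoPoleMap (ha₁ : 0 < a₁) (ha₂ : 0 < a₂) (hb : b₁ < b₂) (i : Fin 3) :
    SurjOn (twoPoleMap a₁ a₂ b₁ b₂) (twoPoleIntervals b₁ b₂ i) univ := by
  have hcont : ContinuousOn (twoPoleMap a₁ a₂ b₁ b₂) (twoPoleIntervals b₁ b₂ i) := fun x hx =>
    (hasDerivAt_twoPoleMap (ne_of_mem_twoPoleIntervals hb hx).1
      (ne_of_mem_twoPoleIntervals hb hx).2).continuousAt.continuousWithinAt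
  have hconn := (convex_twoPoleIntervals (b₁ := b₁) (b₂ := b₂) i).isPreconnected
  have hrest₁ : ContinuousAt (fun x => x - a₂ / (x - b₂)) b₁ :=
    continuousAt_id.sub (continuousAt_const.div (continuousAt_id.sub continuousAt_const)
      (sub_ne_zero.2 hb.ne))
  have hrest₂ : ContinuousAt (fun x => x - a₁ / (x - b₁)) b₂ :=
    continuousAt_id.sub (continuousAt_const.div (continuousAt_id.sub continuousAt_const)
      (sub_ne_zero.2 hb.ne'))
  fin_cases i
  · exact hconn.intermediate_value_Iii (l₂ := 𝓝[<] b₁) (le_principal_iff.2 (Iio_mem_atBot b₁))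
      (le_principal_iff.2 self_mem_nhdsWithin) hcont tendsto_twoPoleMap_atBot
      ((hrest₁.tendsto_sub_div_sub_nhdsLT ha₁).congr fun x => sub_right_comm _ _ _)
  · exact hconn.intermediate_value_Iii (le_principal_iff.2 (Ioo_mem_nhdsGT hb))
      (le_principal_iff.2 (Ioo_mem_nhdsLT hb)) hcont
      ((hrest₁.tendsto_sub_div_sub_nhdsGT ha₁).congr fun x => sub_right_comm _ _ _)
      (hrest₂.tendsto_sub_div_sub_nhdsLT ha₂)
  · exact hconn.intermediate_value_Iii (l₁ := 𝓝[>] b₂) (le_principal_iff.2 self_mem_nhdsWithin)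
      (le_principal_iff.2 (Ioi_mem_atTop b₂)) hcont (hrest₂.tendsto_sub_div_sub_nhdsGT ha₂)
      tendsto_twoPoleMap_atTop

theorem cubic_eq_zero_of_twoPoleMap_eq {x y : ℝ} (h₁ : x ≠ b₁) (h₂ : x ≠ b₂)
    (h : twoPoleMap a₁ a₂ b₁ b₂ x = y) :
    x ^ 3 + -(y + b₁ + b₂) * x ^ 2 + (y * b₁ + y * b₂ + b₁ * b₂ - a₁ - a₂) * x +
      (a₁ * b₂ + a₂ * b₁ - y * b₁ * b₂) = 0 := by
  have e₁ : a₁ / (x - b₁) * (x - b₁) = a₁ := div_mul_cancel₀ a₁ (sub_ne_zero.2 h₁)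
  have e₂ : a₂ / (x - b₂) * (x - b₂) = a₂ := div_mul_cancel₀ a₂ (sub_ne_zero.2 h₂)
  unfold twoPoleMap at h
  linear_combination (x - b₁) * (x - b₂) * h + (x - b₂) * e₁ + (x - b₁) * e₂

theorem sum_eq_of_twoPoleMap_eq (hb : b₁ < b₂) {y : ℝ} {r : Fin 3 → ℝ}
    (hr : ∀ i, r i ∈ twoPoleIntervals b₁ b₂ i) (hu : ∀ i, twoPoleMap a₁ a₂ b₁ b₂ (r i) = y) :
    ∑ i, r i = y + (b₁ + b₂) := by
  have hcubic := fun i => cubic_eq_zero_of_twoPoleMap_eq (ne_of_mem_twoPoleIntervals hb (hr i)).1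
    (ne_of_mem_twoPoleIntervals hb (hr i)).2 (hu i)
  have h₀ : r 0 < b₁ := hr 0
  have h₁ : r 1 ∈ Ioo b₁ b₂ := hr 1
  have h₂ : b₂ < r 2 := hr 2
  rw [Fin.sum_univ_three, add_add_eq_neg_of_cubic_eq_zero (h₀.trans h₁.1).ne
    (h₀.trans (hb.trans h₂)).ne (h₁.2.trans h₂).ne (hcubic 0) (hcubic 1) (hcubic 2)]
  ring

end TwoPoles

theorem meromorphic_reduction_two_poles_general (a₁ a₂ b₁ b₂ : ℝ) (ha₁ : 0 < a₁) (ha₂ : 0 < a₂)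
    (hb : b₁ < b₂) (F : ℝ → ℝ) (hInt : Integrable F) :
    (∫ x in Iio b₁, F (x - a₁ / (x - b₁) - a₂ / (x - b₂))) +
    (∫ x in Ioo b₁ b₂, F (x - a₁ / (x - b₁) - a₂ / (x - b₂))) +
    (∫ x in Ioi b₂, F (x - a₁ / (x - b₁) - a₂ / (x - b₂)))
      = ∫ x, F x := by
  have h := sum_setIntegral_comp_eq_integral isOpen_twoPoleIntervals convex_twoPoleIntervals
    (fun _ x hx => hasDerivAt_twoPoleMap (ne_of_mem_twoPoleIntervals hb hx).1
      (ne_of_mem_twoPoleIntervals hb hx).2)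
    (fun _ _ _ => by positivity) (surjOn_twoPoleMap ha₁ ha₂ hb) (b₁ + b₂)
    (fun _ _ => sum_eq_of_twoPoleMap_eq hb) hInt
  rwa [Fin.sum_univ_three] at h

theorem meromorphic_reduction_two_poles (a₁ a₂ b₁ b₂ : ℝ) (ha₁ : 0 < a₁) (ha₂ : 0 < a₂)
    (hb : b₁ < b₂) (F : ℝ → ℝ) (hF : Continuous F) (hInt : Integrable F) :
    (∫ x in Iio b₁, F (x - a₁ / (x - b₁) - a₂ / (x - b₂))) +
    (∫ x in Ioo b₁ b₂, F (x - a₁ / (x - b₁) - a₂ / (x - b₂))) +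
    (∫ x in Ioi b₂, F (x - a₁ / (x - b₁) - a₂ / (x - b₂)))
      = ∫ x, F x :=
  meromorphic_reduction_two_poles_general a₁ a₂ b₁ b₂ ha₁ ha₂ hb F hInt
end

section
/- For 0 < b < a, the integral over (0, ∞) of x^(-5/2)·exp(-(1/x)·((1 - a x)/(1 - b x))²) dx equals √π·(a - b + 1/2). -/
/-!
Substituting `x = s⁻²` and using evenness turns the integral into `∫ s² exp (-φ(s)²) ds` over `ℝ`,
where `φ(s) = s (s² - a) / (s² - b)`. The lines `s = ±√b` cut `ℝ` into three branches on each of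
which `φ` is strictly increasing onto `ℝ`: `φ(s) = u` is the cubic `s³ - u s² - a s + u b = 0`,
which changes sign at `-∞, -√b, √b, +∞`. Changing variables `u = φ(s)` on each branch gives
`∫ (Σᵢ sᵢ² / φ'(sᵢ)) exp (-u²) du`, where `s₁, s₂, s₃` are the three roots. By Vieta's formulas
this sum of weights is `u² + a - b`, and the Gaussian moments give `√π (a - b + 1/2)`.
-/

open MeasureTheory Set Real Function

theorem StrictMonoOn.monotone_invFunOn {α β : Type*} [LinearOrder α] [LinearOrder β] [Nonempty α]
    {f : α → β} {S : Set α} (hf : StrictMonoOn f S) (hsurj : SurjOn f S univ) :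
    Monotone (invFunOn f S) := by
  intro u v huv
  obtain ⟨hu, hfu⟩ := invFunOn_pos (hsurj (mem_univ u))
  obtain ⟨hv, hfv⟩ := invFunOn_pos (hsurj (mem_univ v))
  exact (hf.le_iff_le hu hv).mp (by rwa [hfu, hfv])

section ChangeOfVariables

variable {f f' : ℝ → ℝ} {S : Set ℝ}

theorem abs_deriv_smul_comp_invFunOn_div (hf' : ∀ x ∈ S, 0 < f' x) (hinj : InjOn f S)
    (F : ℝ → ℝ) {x : ℝ} (hx : x ∈ S) :
    |f' x| • (F (invFunOn f S (f x)) / f' (invFunOn f S (f x))) = F x := by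
  rw [hinj.leftInvOn_invFunOn hx, abs_of_pos (hf' x hx), smul_eq_mul,
    mul_div_cancel₀ _ (hf' x hx).ne']

theorem integrableOn_iff_integrable_comp_invFunOn_div (hS : MeasurableSet S)
    (hf : ∀ x ∈ S, HasDerivWithinAt f (f' x) S x) (hf' : ∀ x ∈ S, 0 < f' x) (hinj : InjOn f S)
    (hsurj : SurjOn f S univ) (F : ℝ → ℝ) :
    IntegrableOn F S ↔ Integrable fun u => F (invFunOn f S u) / f' (invFunOn f S u) := by
  rw [← integrableOn_univ, ← eq_univ_of_univ_subset hsurj,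
    integrableOn_image_iff_integrableOn_abs_deriv_smul hS hf hinj]
  exact integrableOn_congr_fun
    (fun x hx => (abs_deriv_smul_comp_invFunOn_div hf' hinj F hx).symm) hS

theorem setIntegral_eq_integral_comp_invFunOn_div (hS : MeasurableSet S)
    (hf : ∀ x ∈ S, HasDerivWithinAt f (f' x) S x) (hf' : ∀ x ∈ S, 0 < f' x) (hinj : InjOn f S)
    (hsurj : SurjOn f S univ) (F : ℝ → ℝ) :
    ∫ x in S, F x = ∫ u, F (invFunOn f S u) / f' (invFunOn f S u) := by
  have h := integral_image_eq_integral_abs_deriv_smul hS hf hinj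
    fun u => F (invFunOn f S u) / f' (invFunOn f S u)
  rw [eq_univ_of_univ_subset hsurj, setIntegral_univ] at h
  rw [h]
  exact setIntegral_congr_fun hS fun x hx => (abs_deriv_smul_comp_invFunOn_div hf' hinj F hx).symm

end ChangeOfVariables

theorem vieta_of_three_roots {K : Type*} [CommRing K] [IsDomain K] {p q r x y z : K}
    (hxy : x ≠ y) (hxz : x ≠ z) (hyz : y ≠ z) (hx : x ^ 3 + p * x ^ 2 + q * x + r = 0)
    (hy : y ^ 3 + p * y ^ 2 + q * y + r = 0) (hz : z ^ 3 + p * z ^ 2 + q * z + r = 0) :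
    p = -(x + y + z) ∧ q = x * y + x * z + y * z := by
  have hxy' : x ^ 2 + x * y + y ^ 2 + p * (x + y) + q = 0 :=
    mul_left_cancel₀ (sub_ne_zero.2 hxy) (by linear_combination hx - hy)
  have hxz' : x ^ 2 + x * z + z ^ 2 + p * (x + z) + q = 0 :=
    mul_left_cancel₀ (sub_ne_zero.2 hxz) (by linear_combination hx - hz)
  have hp : p = -(x + y + z) := by
    have : x + y + z + p = 0 :=
      mul_left_cancel₀ (sub_ne_zero.2 hyz) (by linear_combination hxy' - hxz')
    linear_combination this
  exact ⟨hp, by linear_combination hxy' - (x + y) * hp⟩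

theorem integrable_sq_mul_exp_neg_sq : Integrable fun u : ℝ => u ^ 2 * exp (-u ^ 2) := by
  simpa [rpow_two] using integrable_rpow_mul_exp_neg_mul_sq one_pos (s := 2) (by norm_num)

theorem integral_sq_mul_exp_neg_sq : ∫ u : ℝ, u ^ 2 * exp (-u ^ 2) = √π / 2 := by
  have hIoi := integral_rpow_mul_exp_neg_mul_rpow (p := 2) (q := 2) two_pos (by norm_num) one_pos
  have hΓ := Real.Gamma_nat_add_one_add_half 0
  norm_num [rpow_two] at hIoi hΓ
  have heven := integral_comp_abs (f := fun u => u ^ 2 * exp (-u ^ 2))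
  simp only [sq_abs] at heven
  rw [heven, hIoi, hΓ]
  ring

theorem sq_add_mul_exp_neg_sq_eq (c : ℝ) :
    (fun u : ℝ => (u ^ 2 + c) * exp (-u ^ 2)) =
      fun u => u ^ 2 * exp (-u ^ 2) + c * exp (-1 * u ^ 2) := by
  ext u
  ring_nf

theorem integrable_sq_add_mul_exp_neg_sq (c : ℝ) :
    Integrable fun u : ℝ => (u ^ 2 + c) * exp (-u ^ 2) := by
  rw [sq_add_mul_exp_neg_sq_eq]
  exact integrable_sq_mul_exp_neg_sq.add ((integrable_exp_neg_mul_sq one_pos).const_mul c)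

theorem integral_sq_add_mul_exp_neg_sq (c : ℝ) :
    ∫ u : ℝ, (u ^ 2 + c) * exp (-u ^ 2) = √π * (c + 1 / 2) := by
  rw [sq_add_mul_exp_neg_sq_eq, integral_add integrable_sq_mul_exp_neg_sq
    ((integrable_exp_neg_mul_sq one_pos).const_mul c), integral_sq_mul_exp_neg_sq,
    integral_const_mul, integral_gaussian, div_one]
  ring

noncomputable section

def phi (a b s : ℝ) : ℝ := s * (s ^ 2 - a) / (s ^ 2 - b)

def phiDeriv (a b s : ℝ) : ℝ := 1 + (a - b) * (s ^ 2 + b) / (s ^ 2 - b) ^ 2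

def phiCubic (a b u s : ℝ) : ℝ := s ^ 3 - u * s ^ 2 - a * s + u * b

end

section Phi

variable {a b u s : ℝ}

theorem phi_neg (a b s : ℝ) : phi a b (-s) = -phi a b s := by
  simp only [phi]; ring

theorem hasDerivAt_phi (hs : s ^ 2 ≠ b) : HasDerivAt (phi a b) (phiDeriv a b s) s := by
  have hs' : s ^ 2 - b ≠ 0 := sub_ne_zero.2 hs
  have h := ((hasDerivAt_id' s).fun_mul ((hasDerivAt_pow 2 s).sub_const a)).fun_div
    ((hasDerivAt_pow 2 s).sub_const b) hs'
  refine h.congr_deriv ?_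
  rw [phiDeriv]
  field_simp
  ring

theorem phiDeriv_pos (hb : 0 ≤ b) (hab : b ≤ a) (s : ℝ) : 0 < phiDeriv a b s := by
  have : 0 ≤ (a - b) * (s ^ 2 + b) / (s ^ 2 - b) ^ 2 :=
    div_nonneg (mul_nonneg (sub_nonneg.2 hab) (by positivity)) (sq_nonneg _)
  simp only [phiDeriv]
  linarith

theorem phi_eq_iff_phiCubic_eq_zero (hs : s ^ 2 ≠ b) : phi a b s = u ↔ phiCubic a b u s = 0 := by
  rw [phi, div_eq_iff (sub_ne_zero.2 hs), phiCubic]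
  constructor <;> intro h <;> linear_combination h

theorem phiDeriv_eq_of_phi_eq (hs : s ^ 2 ≠ b) (hu : phi a b s = u) :
    phiDeriv a b s = (3 * s ^ 2 - 2 * u * s - a) / (s ^ 2 - b) := by
  have hs' : s ^ 2 - b ≠ 0 := sub_ne_zero.2 hs
  rw [phi, div_eq_iff hs'] at hu
  rw [phiDeriv, eq_div_iff hs']
  field_simp
  linear_combination (-2 * s) * hu

theorem phiCubic_neg (a b u s : ℝ) : phiCubic a b u (-s) = -phiCubic a b (-u) s := by
  simp only [phiCubic]; ring

theorem phiCubic_pos_of_le (ha : 0 ≤ a) (hb : 0 ≤ b) {T : ℝ} (hT : 1 + |u| + a + |u| * b ≤ T) :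
    0 < phiCubic a b u T := by
  have hub : 0 ≤ |u| * b := mul_nonneg (abs_nonneg u) hb
  have hTu : 1 ≤ T - u := by linarith [le_abs_self u]
  have hT1 : 1 ≤ T := by linarith [abs_nonneg u]
  calc (0 : ℝ) < 1 := one_pos
    _ ≤ T * (1 + |u| * b) - |u| * b := by nlinarith
    _ ≤ T * (T - a) - |u| * b := by gcongr; linarith [abs_nonneg u]
    _ ≤ T ^ 2 * (T - u) - a * T + u * b := by nlinarith [neg_abs_le u]
    _ = phiCubic a b u T := by rw [phiCubic]; ring

theorem sq_div_phiDeriv_add_add {x y z : ℝ} (hxy : x ≠ y) (hxz : x ≠ z) (hyz : y ≠ z)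
    (hx : x ^ 2 ≠ b) (hy : y ^ 2 ≠ b) (hz : z ^ 2 ≠ b)
    (hux : phi a b x = u) (huy : phi a b y = u) (huz : phi a b z = u) :
    x ^ 2 / phiDeriv a b x + y ^ 2 / phiDeriv a b y + z ^ 2 / phiDeriv a b z = u ^ 2 + (a - b) := by
  rw [phiDeriv_eq_of_phi_eq hx hux, phiDeriv_eq_of_phi_eq hy huy, phiDeriv_eq_of_phi_eq hz huz]
  rw [phi_eq_iff_phiCubic_eq_zero hx, phiCubic] at hux
  rw [phi_eq_iff_phiCubic_eq_zero hy, phiCubic] at huy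
  rw [phi_eq_iff_phiCubic_eq_zero hz, phiCubic] at huz
  obtain ⟨hu, ha⟩ := vieta_of_three_roots hxy hxz hyz (p := -u) (q := -a) (r := u * b)
    (by linear_combination hux) (by linear_combination huy) (by linear_combination huz)
  obtain rfl : u = x + y + z := by linear_combination -hu
  obtain rfl : a = -(x * y + x * z + y * z) := by linear_combination -ha
  have hx' : x ^ 2 - b ≠ 0 := sub_ne_zero.2 hx
  have hy' : y ^ 2 - b ≠ 0 := sub_ne_zero.2 hy
  have hz' : z ^ 2 - b ≠ 0 := sub_ne_zero.2 hz
  have hxy' : x - y ≠ 0 := sub_ne_zero.2 hxy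
  have hxz' : x - z ≠ 0 := sub_ne_zero.2 hxz
  have hyz' : y - z ≠ 0 := sub_ne_zero.2 hyz
  -- `3s² - 2us - a` is the derivative of the cubic `(s - x)(s - y)(s - z)`
  rw [show 3 * x ^ 2 - 2 * (x + y + z) * x - -(x * y + x * z + y * z) = (x - y) * (x - z) by ring,
    show 3 * y ^ 2 - 2 * (x + y + z) * y - -(x * y + x * z + y * z) = -((x - y) * (y - z)) by ring,
    show 3 * z ^ 2 - 2 * (x + y + z) * z - -(x * y + x * z + y * z) = (x - z) * (y - z) by ring]
  field_simp
  ring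

end Phi

def branch (b : ℝ) : Fin 3 → Set ℝ := ![Iio (-√b), Ioo (-√b) √b, Ioi √b]

section Branch

variable {a b : ℝ}

theorem measurableSet_branch (i : Fin 3) : MeasurableSet (branch b i) := by
  fin_cases i <;> simp [branch, measurableSet_Iio, measurableSet_Ioo, measurableSet_Ioi]

theorem convex_branch (i : Fin 3) : Convex ℝ (branch b i) := by
  fin_cases i <;> simp [branch, convex_Iio, convex_Ioo, convex_Ioi]

theorem pairwise_disjoint_branch : Pairwise (Disjoint on branch b) := by
  have := neg_le_self (sqrt_nonneg b)
  intro i j hij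
  fin_cases i <;> fin_cases j <;> simp [branch, onFun, disjoint_left] at hij ⊢ <;>
    intros <;> linarith

theorem iUnion_branch : ⋃ i, branch b i = {-√b, √b}ᶜ := by
  have := neg_le_self (sqrt_nonneg b)
  ext s
  simp only [branch, mem_iUnion, Fin.exists_fin_succ, Fin.isValue, Matrix.cons_val_zero, mem_Iio,
    Matrix.cons_val_succ, mem_Ioo, Matrix.cons_val_fin_one, mem_Ioi, exists_const, mem_compl_iff,
    mem_insert_iff, mem_singleton_iff, not_or]
  grind

theorem sq_ne_of_mem_branch (hb : 0 ≤ b) {i : Fin 3} {s : ℝ} (hs : s ∈ branch b i) :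
    s ^ 2 ≠ b := by
  have hs' : s ∉ ({-√b, √b} : Set ℝ) := by
    rw [← mem_compl_iff, ← iUnion_branch]; exact mem_iUnion_of_mem i hs
  rw [← sq_sqrt hb, Ne, sq_eq_sq_iff_eq_or_eq_neg]
  simpa [or_comm] using hs'

theorem exists_phiCubic_eq_zero_mem_branch (hb : 0 < b) (hab : b < a) (u : ℝ) (i : Fin 3) :
    ∃ s ∈ branch b i, phiCubic a b u s = 0 := by
  set c := √b
  have hc : 0 < c := sqrt_pos.2 hb
  have hcb : c ^ 2 = b := sq_sqrt hb.le
  have hcont : Continuous (phiCubic a b u) := by unfold phiCubic; fun_prop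
  have hpc : phiCubic a b u c < 0 := by
    rw [phiCubic, show c ^ 3 = c * c ^ 2 by ring, hcb]; nlinarith
  have hnc : 0 < phiCubic a b u (-c) := by
    rw [phiCubic, show (-c) ^ 3 = -(c * c ^ 2) by ring, neg_sq, hcb]; nlinarith
  set T := 1 + |u| + a + |u| * b + c
  have hTc : c ≤ T := by linarith [abs_nonneg u, mul_nonneg (abs_nonneg u) hb.le]
  have hpT : 0 < phiCubic a b u T := phiCubic_pos_of_le (by linarith) hb.le (by linarith)
  have hnT : phiCubic a b u (-T) < 0 := by
    have := phiCubic_pos_of_le (a := a) (u := -u) (T := T) (by linarith) hb.le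
      (by rw [abs_neg]; linarith)
    rw [phiCubic_neg]; linarith
  fin_cases i
  · obtain ⟨s, hs, hs0⟩ :=
      intermediate_value_Ioo (neg_le_neg hTc) hcont.continuousOn ⟨hnT, hnc⟩
    exact ⟨s, hs.2, hs0⟩
  · obtain ⟨s, hs, hs0⟩ :=
      intermediate_value_Ioo' (neg_le_self hc.le) hcont.continuousOn ⟨hpc, hnc⟩
    exact ⟨s, hs, hs0⟩
  · obtain ⟨s, hs, hs0⟩ := intermediate_value_Ioo hTc hcont.continuousOn ⟨hpc, hpT⟩
    exact ⟨s, hs.1, hs0⟩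

theorem surjOn_phi_branch (hb : 0 < b) (hab : b < a) (i : Fin 3) :
    SurjOn (phi a b) (branch b i) univ := fun u _ => by
  obtain ⟨s, hs, hs0⟩ := exists_phiCubic_eq_zero_mem_branch hb hab u i
  exact ⟨s, hs, (phi_eq_iff_phiCubic_eq_zero (sq_ne_of_mem_branch hb.le hs)).2 hs0⟩

theorem strictMonoOn_phi_branch (hb : 0 ≤ b) (hab : b ≤ a) (i : Fin 3) :
    StrictMonoOn (phi a b) (branch b i) := by
  have hderiv {s} (hs : s ∈ branch b i) := hasDerivAt_phi (a := a) (sq_ne_of_mem_branch hb hs)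
  refine strictMonoOn_of_deriv_pos (convex_branch i)
    (fun s hs => (hderiv hs).continuousAt.continuousWithinAt) fun s hs => ?_
  rw [(hderiv (interior_subset hs)).deriv]
  exact phiDeriv_pos hb hab s

theorem integral_eq_sum_branch {F : ℝ → ℝ} (hF : ∀ i, IntegrableOn F (branch b i)) :
    ∫ s, F s = ∑ i, ∫ s in branch b i, F s := by
  rw [← integral_iUnion_fintype measurableSet_branch pairwise_disjoint_branch hF, iUnion_branch,
    setIntegral_congr_set (ae_eq_univ.2 ?_), setIntegral_univ]
  rw [compl_compl]
  exact (toFinite _).measure_zero _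

end Branch

noncomputable def branchWeight (a b : ℝ) (i : Fin 3) (u : ℝ) : ℝ :=
  invFunOn (phi a b) (branch b i) u ^ 2 / phiDeriv a b (invFunOn (phi a b) (branch b i) u)

section BranchWeight

variable {a b : ℝ}

theorem invFunOn_phi_mem_branch (hb : 0 < b) (hab : b < a) (i : Fin 3) (u : ℝ) :
    invFunOn (phi a b) (branch b i) u ∈ branch b i ∧
      phi a b (invFunOn (phi a b) (branch b i) u) = u :=
  invFunOn_pos (surjOn_phi_branch hb hab i (mem_univ u))

theorem sum_branchWeight (hb : 0 < b) (hab : b < a) (u : ℝ) :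
    ∑ i, branchWeight a b i u = u ^ 2 + (a - b) := by
  have h i := invFunOn_phi_mem_branch hb hab i u
  have hne {i j : Fin 3} (hij : i ≠ j) :=
    (pairwise_disjoint_branch hij).ne_of_mem (h i).1 (h j).1
  rw [Fin.sum_univ_three]
  exact sq_div_phiDeriv_add_add (hne (by decide)) (hne (by decide)) (hne (by decide))
    (sq_ne_of_mem_branch hb.le (h 0).1) (sq_ne_of_mem_branch hb.le (h 1).1)
    (sq_ne_of_mem_branch hb.le (h 2).1) (h 0).2 (h 1).2 (h 2).2

theorem branchWeight_nonneg (hb : 0 ≤ b) (hab : b ≤ a) (i : Fin 3) (u : ℝ) :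
    0 ≤ branchWeight a b i u :=
  div_nonneg (sq_nonneg _) (phiDeriv_pos hb hab _).le

theorem measurable_branchWeight (hb : 0 < b) (hab : b < a) (i : Fin 3) :
    Measurable (branchWeight a b i) := by
  have hinv : Measurable (invFunOn (phi a b) (branch b i)) :=
    ((strictMonoOn_phi_branch hb.le hab.le i).monotone_invFunOn
      (surjOn_phi_branch hb hab i)).measurable
  have hderiv : Measurable (phiDeriv a b) := by unfold phiDeriv; fun_prop
  exact (hinv.pow_const 2).div (hderiv.comp hinv)

theorem integrable_branchWeight_mul_exp (hb : 0 < b) (hab : b < a) (i : Fin 3) :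
    Integrable fun u => branchWeight a b i u * exp (-u ^ 2) := by
  refine (integrable_sq_add_mul_exp_neg_sq (a - b)).mono'
    ((measurable_branchWeight hb hab i).mul (by fun_prop)).aestronglyMeasurable
    (ae_of_all _ fun u => ?_)
  have hw j := branchWeight_nonneg hb.le hab.le j u
  rw [norm_of_nonneg (mul_nonneg (hw i) (exp_pos _).le), ← sum_branchWeight hb hab u]
  exact mul_le_mul_of_nonneg_right (Finset.single_le_sum (fun j _ => hw j) (Finset.mem_univ i))
    (exp_pos _).le

theorem comp_invFunOn_div_phiDeriv_branch (hb : 0 < b) (hab : b < a) (i : Fin 3) (u : ℝ) :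
    invFunOn (phi a b) (branch b i) u ^ 2 * exp (-phi a b (invFunOn (phi a b) (branch b i) u) ^ 2) /
        phiDeriv a b (invFunOn (phi a b) (branch b i) u) = branchWeight a b i u * exp (-u ^ 2) := by
  rw [branchWeight, (invFunOn_phi_mem_branch hb hab i u).2]
  ring

theorem integrableOn_branch (hb : 0 < b) (hab : b < a) (i : Fin 3) :
    IntegrableOn (fun s => s ^ 2 * exp (-phi a b s ^ 2)) (branch b i) := by
  rw [integrableOn_iff_integrable_comp_invFunOn_div (measurableSet_branch i)
    (fun s hs => (hasDerivAt_phi (sq_ne_of_mem_branch hb.le hs)).hasDerivWithinAt)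
    (fun s _ => phiDeriv_pos hb.le hab.le s) (strictMonoOn_phi_branch hb.le hab.le i).injOn
    (surjOn_phi_branch hb hab i)]
  simp_rw [comp_invFunOn_div_phiDeriv_branch hb hab i]
  exact integrable_branchWeight_mul_exp hb hab i

theorem setIntegral_branch (hb : 0 < b) (hab : b < a) (i : Fin 3) :
    ∫ s in branch b i, s ^ 2 * exp (-phi a b s ^ 2) = ∫ u, branchWeight a b i u * exp (-u ^ 2) := by
  rw [setIntegral_eq_integral_comp_invFunOn_div (measurableSet_branch i)
    (fun s hs => (hasDerivAt_phi (sq_ne_of_mem_branch hb.le hs)).hasDerivWithinAt)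
    (fun s _ => phiDeriv_pos hb.le hab.le s) (strictMonoOn_phi_branch hb.le hab.le i).injOn
    (surjOn_phi_branch hb hab i)]
  simp_rw [comp_invFunOn_div_phiDeriv_branch hb hab i]

end BranchWeight

theorem integral_sq_mul_exp_neg_phi_sq (a b : ℝ) :
    ∫ s, s ^ 2 * exp (-phi a b s ^ 2) = 2 * ∫ s in Ioi (0 : ℝ), s ^ 2 * exp (-phi a b s ^ 2) := by
  rw [← integral_comp_abs]
  congr 1 with s
  rcases abs_choice s with h | h <;> rw [h]
  rw [phi_neg, neg_sq, neg_sq]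

theorem integral_Ioi_eq_two_mul_integral_Ioi_phi (a b : ℝ) :
    ∫ x in Ioi (0 : ℝ), x ^ (-(5 : ℝ) / 2) * exp (-(1 / x) * ((1 - a * x) / (1 - b * x)) ^ 2) =
      2 * ∫ s in Ioi (0 : ℝ), s ^ 2 * exp (-phi a b s ^ 2) := by
  rw [← integral_comp_rpow_Ioi
    (fun x => x ^ (-(5 : ℝ) / 2) * exp (-(1 / x) * ((1 - a * x) / (1 - b * x)) ^ 2))
    (show (-2 : ℝ) ≠ 0 by norm_num), ← integral_const_mul]
  refine setIntegral_congr_fun measurableSet_Ioi fun s (hs : 0 < s) => ?_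
  have hs2 : s ^ (-2 : ℝ) = (s ^ 2)⁻¹ := by rw [rpow_neg hs.le, rpow_two]
  have hs3 : s ^ (-2 - 1 : ℝ) = (s ^ 3)⁻¹ := by
    rw [show (-2 - 1 : ℝ) = -(3 : ℕ) by norm_num, rpow_neg hs.le, rpow_natCast]
  have hs5 : (s ^ (-2 : ℝ)) ^ (-(5 : ℝ) / 2) = s ^ 5 := by
    rw [← rpow_mul hs.le, show (-2 : ℝ) * (-(5 : ℝ) / 2) = (5 : ℕ) by norm_num, rpow_natCast]
  have hfrac : (1 - a * (s ^ 2)⁻¹) / (1 - b * (s ^ 2)⁻¹) = (s ^ 2 - a) / (s ^ 2 - b) := by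
    rw [← div_div_div_cancel_right₀ (pow_ne_zero 2 hs.ne') (s ^ 2 - a)]
    congr 1 <;> field_simp
  rw [hs5, hs3, hs2, hfrac, smul_eq_mul, phi]
  field_simp
  ring

theorem example_integral_I1 (a b : ℝ) (hb : 0 < b) (hab : b < a) :
    (∫ x in Ioi (0:ℝ), x ^ (-(5:ℝ)/2) * Real.exp (-(1/x) * ((1 - a*x)/(1 - b*x)) ^ 2))
      = Real.sqrt π * (a - b + 1/2) := by
  rw [integral_Ioi_eq_two_mul_integral_Ioi_phi, ← integral_sq_mul_exp_neg_phi_sq,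
    integral_eq_sum_branch (integrableOn_branch hb hab)]
  simp_rw [setIntegral_branch hb hab]
  rw [← integral_finsetSum _ fun i _ => integrable_branchWeight_mul_exp hb hab i]
  simp_rw [← Finset.sum_mul, sum_branchWeight hb hab]
  exact integral_sq_add_mul_exp_neg_sq (a - b)
end

section
/- For all real x not an integer, π/tan(π x) = 1/x + Σ_{k=1}^∞ (1/(x - k) + 1/(x + k)), where the series converges. -/
/-! Logarithmic differentiation of Euler's product `sin (π z) = π z ∏ (1 - z² / n²)` gives the
partial sums of the series as the logarithmic derivatives of the partial products; they converge
to `π cot (π z) - 1 / z` off the integers. For real `z` every term is real, and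
`π / tan = π cot` holds even where `tan` takes its junk value `0`. -/

open Real

theorem Complex.hasSum_cotTerm {z : ℂ} (hz : z ∈ integerComplement) :
    HasSum (cotTerm z) (π * cot (π * z) - 1 / z) :=
  (summable_cotTerm hz).hasSum_iff_tendsto_nat.mpr (tendsto_logDeriv_euler_cot_sub hz)

theorem Complex.ofReal_mem_integerComplement {x : ℝ} (hx : ∀ n : ℤ, x ≠ n) :
    (x : ℂ) ∈ integerComplement := by
  rintro ⟨n, hn⟩
  exact hx n (by exact_mod_cast hn.symm)

theorem Real.div_tan_eq_mul_cot (a x : ℝ) : a / tan x = a * cot x := by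
  rw [tan_eq_sin_div_cos, cot_eq_cos_div_sin, div_div_eq_mul_div, mul_div_assoc]

theorem cot_partial_fractions (x : ℝ) (hx : ∀ n : ℤ, x ≠ n) :
    HasSum (fun k : ℕ => 1 / (x - (k + 1)) + 1 / (x + (k + 1)))
      (π / Real.tan (π * x) - 1 / x) := by
  rw [← Complex.hasSum_ofReal, Real.div_tan_eq_mul_cot]
  convert Complex.hasSum_cotTerm (Complex.ofReal_mem_integerComplement hx) using 1
  · ext k
    simp [cotTerm]
  · simp [Complex.ofReal_cot]
end

section
/- The integral over (0, ∞) of x/sinh(x) dx equals π²/4. -/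
/-!
Expanding `1 / sinh x = 2 e^{-x} / (1 - e^{-2x})` as a geometric series gives
`x / sinh x = ∑ₙ 2 x e^{-(2n+1)x}` for `x > 0`. Integrating term by term (the terms
are nonnegative) with `∫₀^∞ x e^{-cx} dx = 1 / c²` yields `2 ∑ₙ 1 / (2n+1)² = 2 · π² / 8`,
the odd part of `ζ(2) = π² / 6`.
-/

open MeasureTheory Set Real

lemma integral_mul_exp_neg_mul_Ioi {c : ℝ} (hc : 0 < c) :
    ∫ x in Ioi (0:ℝ), x * exp (-(c * x)) = 1 / c ^ 2 := by
  have h := integral_rpow_mul_exp_neg_mul_Ioi two_pos hc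
  norm_num [Gamma_two] at h
  simpa using h

lemma integrableOn_mul_exp_neg_mul_Ioi {c : ℝ} (hc : 0 < c) :
    IntegrableOn (fun x ↦ x * exp (-(c * x))) (Ioi 0) :=
  .of_integral_ne_zero (by rw [integral_mul_exp_neg_mul_Ioi hc]; positivity)

lemma hasSum_one_div_odd_sq :
    HasSum (fun n : ℕ ↦ 1 / (2 * (n : ℝ) + 1) ^ 2) (π ^ 2 / 8) := by
  set f : ℕ → ℝ := fun n ↦ 1 / (n : ℝ) ^ 2
  have heven : HasSum (fun n ↦ f (2 * n)) (π ^ 2 / 24) := by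
    have h := hasSum_zeta_two.mul_left (1 / 4)
    rwa [show π ^ 2 / 24 = 1 / 4 * (π ^ 2 / 6) by ring,
      show (fun n ↦ f (2 * n)) = fun n ↦ 1 / 4 * f n by ext n; simp [f]; ring]
  have hodd : Summable (fun n ↦ f (2 * n + 1)) :=
    hasSum_zeta_two.summable.comp_injective fun m n h ↦ by simpa using h
  have htotal := hasSum_zeta_two.unique (heven.even_add_odd hodd.hasSum)
  have h := hodd.hasSum
  rwa [show ∑' n, f (2 * n + 1) = π ^ 2 / 8 by linarith,
    show (fun n ↦ f (2 * n + 1)) = fun n : ℕ ↦ 1 / (2 * (n : ℝ) + 1) ^ 2 by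
      ext n; simp [f]] at h

lemma hasSum_inv_sinh {x : ℝ} (hx : 0 < x) :
    HasSum (fun n : ℕ ↦ 2 * exp (-((2 * n + 1) * x))) (sinh x)⁻¹ := by
  have hq : exp (-x) ^ 2 < 1 :=
    pow_lt_one₀ (exp_nonneg _) (exp_lt_one_iff.2 (by linarith)) two_ne_zero
  have h := (hasSum_geometric_of_lt_one (by positivity) hq).mul_left (2 * exp (-x))
  have hterm : (fun n : ℕ ↦ 2 * exp (-x) * (exp (-x) ^ 2) ^ n) =
      fun n : ℕ ↦ 2 * exp (-((2 * n + 1) * x)) := by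
    ext n
    rw [← pow_mul, ← exp_nat_mul, mul_assoc, ← exp_add]
    push_cast
    ring_nf
  have hsum : 2 * exp (-x) * (1 - exp (-x) ^ 2)⁻¹ = (sinh x)⁻¹ := by
    have h1 : 1 < exp x := one_lt_exp_iff.2 hx
    rw [sinh_eq, exp_neg]
    field_simp
  rwa [hterm, hsum] at h

lemma integral_eq_of_hasSum_of_nonneg {α ι : Type*} [MeasurableSpace α] {μ : Measure α}
    [Countable ι] {F : ι → α → ℝ} {f : α → ℝ} {a : ℝ}
    (hF_int : ∀ i, Integrable (F i) μ) (hF_nonneg : ∀ i, 0 ≤ᵐ[μ] F i)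
    (hf : ∀ᵐ x ∂μ, HasSum (F · x) (f x)) (ha : HasSum (fun i ↦ ∫ x, F i x ∂μ) a) :
    ∫ x, f x ∂μ = a := by
  have hnorm : (fun i ↦ ∫ x, ‖F i x‖ ∂μ) = fun i ↦ ∫ x, F i x ∂μ :=
    funext fun i ↦ integral_congr_ae <| (hF_nonneg i).mono fun x hx ↦ norm_of_nonneg hx
  have hint := hasSum_integral_of_summable_integral_norm hF_int (hnorm ▸ ha.summable)
  rw [integral_congr_ae (hf.mono fun x hx ↦ hx.tsum_eq.symm)]
  exact hint.unique ha

theorem integral_x_div_sinh :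
    (∫ x in Ioi (0:ℝ), x / Real.sinh x) = π ^ 2 / 4 := by
  have hc (n : ℕ) : (0 : ℝ) < 2 * n + 1 := by positivity
  refine integral_eq_of_hasSum_of_nonneg
    (F := fun (n : ℕ) x ↦ 2 * (x * exp (-((2 * n + 1) * x))))
    (fun n ↦ (integrableOn_mul_exp_neg_mul_Ioi (hc n)).const_mul 2) (fun n ↦ ?_) ?_ ?_
  · filter_upwards [ae_restrict_mem measurableSet_Ioi] with x (hx : 0 < x)
    positivity
  · filter_upwards [ae_restrict_mem measurableSet_Ioi] with x (hx : 0 < x)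
    simpa [div_eq_mul_inv, mul_left_comm x] using (hasSum_inv_sinh hx).mul_left x
  · simp_rw [integral_const_mul, integral_mul_exp_neg_mul_Ioi (hc _)]
    rw [show π ^ 2 / 4 = 2 * (π ^ 2 / 8) by ring]
    exact hasSum_one_div_odd_sq.mul_left 2
end
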